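/- arXiv:2509.14121 — 6 statements merged into one kernel-verified Lean document; each statement's English description precedes it below -/
import Mathlib

section
/- Let σ ∈ ℝⁿ with σ ≠ 0, let A be a real n×n matrix and μ > −1 a real number such that yᵀ A y ≥ μ ‖y‖² for all y ∈ ℝⁿ, let d ∈ ℝⁿ with ‖d‖ ≤ ρ for some ρ ≥ 0, let κ > 0, and set k = (κ + ρ)/(1 + μ). Then ⟨σ, −k σ/‖σ‖ − k A (σ/‖σ‖) + d⟩ ≤ −κ ‖σ‖. -/
open Matrix RealInnerProductSpace

/-!
Pairing with `σ`, the two gain terms give `-k ‖σ‖ (1 + ⟪u, A u⟫)` for the unit vector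
`u = σ / ‖σ‖`, which is at most `-k (1 + μ) ‖σ‖ = -(κ + ρ) ‖σ‖` by coercivity of `A`; by
Cauchy–Schwarz the disturbance adds at most `ρ ‖σ‖`.
-/

section Descent

variable {E : Type*} [NormedAddCommGroup E] [InnerProductSpace ℝ E]

theorem inner_inv_norm_smul_self (σ : E) : ⟪σ, ‖σ‖⁻¹ • σ⟫ = ‖σ‖ := by
  rw [real_inner_smul_right, real_inner_self_eq_norm_sq, sq, ← mul_assoc, inv_mul_mul_self]

theorem mul_norm_le_inner_inv_norm_smul {T : E →ₗ[ℝ] E} {μ : ℝ}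
    (hT : ∀ y, μ * ‖y‖ ^ 2 ≤ ⟪y, T y⟫) (σ : E) :
    μ * ‖σ‖ ≤ ⟪σ, T (‖σ‖⁻¹ • σ)⟫ := by
  calc
    μ * ‖σ‖ = ‖σ‖⁻¹ * (μ * ‖σ‖ ^ 2) := by
      rw [mul_left_comm, sq, ← mul_assoc ‖σ‖⁻¹, inv_mul_mul_self]
    _ ≤ ‖σ‖⁻¹ * ⟪σ, T σ⟫ := mul_le_mul_of_nonneg_left (hT σ) (inv_nonneg.mpr (norm_nonneg σ))
    _ = ⟪σ, T (‖σ‖⁻¹ • σ)⟫ := by rw [map_smul, real_inner_smul_right]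

theorem inner_slidingMode_le {T : E →ₗ[ℝ] E} {μ : ℝ}
    (hT : ∀ y, μ * ‖y‖ ^ 2 ≤ ⟪y, T y⟫) {d : E} {ρ : ℝ} (hd : ‖d‖ ≤ ρ) {k : ℝ} (hk : 0 ≤ k)
    (σ : E) :
    ⟪σ, -(k • (‖σ‖⁻¹ • σ)) - k • T (‖σ‖⁻¹ • σ) + d⟫ ≤ (ρ - k * (1 + μ)) * ‖σ‖ := by
  have hd' : ⟪σ, d⟫ ≤ ‖σ‖ * ρ :=
    (real_inner_le_norm σ d).trans (mul_le_mul_of_nonneg_left hd (norm_nonneg σ))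
  have hT' := mul_le_mul_of_nonneg_left (mul_norm_le_inner_inv_norm_smul hT σ) hk
  rw [inner_add_right, inner_sub_right, inner_neg_right, real_inner_smul_right,
    inner_inv_norm_smul_self, real_inner_smul_right]
  linarith

end Descent

theorem inner_toLpLin_eq_dotProduct_mulVec {ι : Type*} [Fintype ι] [DecidableEq ι]
    (A : Matrix ι ι ℝ) (x y : EuclideanSpace ℝ ι) :
    ⟪x, Matrix.toLpLin 2 2 A y⟫ = x ⬝ᵥ A *ᵥ y := by
  rw [EuclideanSpace.inner_eq_star_dotProduct, star_trivial, dotProduct_comm]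
  rfl

theorem stmt1_general {n : ℕ} (σ : EuclideanSpace ℝ (Fin n))
    (A : Matrix (Fin n) (Fin n) ℝ) (μ : ℝ) (hμ : μ > -1)
    (hA : ∀ y : EuclideanSpace ℝ (Fin n), μ * ‖y‖ ^ 2 ≤ y ⬝ᵥ A.mulVec y)
    (d : EuclideanSpace ℝ (Fin n)) (ρ : ℝ) (hd : ‖d‖ ≤ ρ)
    (κ : ℝ) (hκ : 0 < κ) (k : ℝ) (hk : k = (κ + ρ) / (1 + μ)) :
    ⟪σ, -(k • (‖σ‖⁻¹ • σ))
        - k • (EuclideanSpace.equiv (Fin n) ℝ).symm (A.mulVec (‖σ‖⁻¹ • σ)) + d⟫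
      ≤ -κ * ‖σ‖ := by
  have hρ : 0 ≤ ρ := (norm_nonneg d).trans hd
  have hμ' : 0 < 1 + μ := by linarith
  have hgain : k * (1 + μ) = κ + ρ := by rw [hk]; field_simp
  have hk0 : 0 ≤ k := by rw [hk]; positivity
  have hA' : ∀ y, μ * ‖y‖ ^ 2 ≤ ⟪y, Matrix.toLpLin 2 2 A y⟫ := fun y => by
    rw [inner_toLpLin_eq_dotProduct_mulVec]; exact hA y
  calc _ ≤ (ρ - k * (1 + μ)) * ‖σ‖ := inner_slidingMode_le hA' hd hk0 σ
    _ = -κ * ‖σ‖ := by rw [hgain]; ring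

/-- Pointwise descent inequality at the heart of Theorem 1: with the sliding-mode gain
`k = (κ + ρ)/(1 + μ)`, one has `⟨σ, −k σ/‖σ‖ − k A (σ/‖σ‖) + d⟩ ≤ −κ ‖σ‖`. -/
theorem stmt1 {n : ℕ} (σ : EuclideanSpace ℝ (Fin n)) (hσ : σ ≠ 0)
    (A : Matrix (Fin n) (Fin n) ℝ) (μ : ℝ) (hμ : μ > -1)
    (hA : ∀ y : EuclideanSpace ℝ (Fin n), μ * ‖y‖ ^ 2 ≤ y ⬝ᵥ A.mulVec y)
    (d : EuclideanSpace ℝ (Fin n)) (ρ : ℝ) (hρ : 0 ≤ ρ) (hd : ‖d‖ ≤ ρ)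
    (κ : ℝ) (hκ : 0 < κ) (k : ℝ) (hk : k = (κ + ρ) / (1 + μ)) :
    ⟪σ, -(k • (‖σ‖⁻¹ • σ))
        - k • (EuclideanSpace.equiv (Fin n) ℝ).symm (A.mulVec (‖σ‖⁻¹ • σ)) + d⟫
      ≤ -κ * ‖σ‖ :=
  stmt1_general σ A μ hμ hA d ρ hd κ hκ k hk
end

section
/- Let E be a real inner product space and let h : E → ℝ be differentiable with gradient ∇h. Let v : E → E, and let α > 0, η ≥ 0 be such that ‖∇h(y)‖ ≤ η and ⟨∇h(y), v(y)⟩ ≥ −α h(y) for all y ∈ E. Let β > 0, let x, σ : ℝ → E be differentiable with x′(t) = σ(t) + v(x(t)) for all t ≥ 0, suppose h(x(0)) > 0, set α_c = (‖σ(0)‖² + β)/(2 h(x(0))) and κ = (α/2)‖σ(0)‖ + α_c η, and suppose ⟨σ(t), σ′(t)⟩ ≤ −κ ‖σ(t)‖ for all t ≥ 0. Then h(x(t)) ≥ ‖σ(t)‖²/(2 α_c) ≥ 0 for all t ≥ 0. -/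
/-!
Along the trajectory, the barrier margin `W = h ∘ x - ‖σ‖² / (2 α_c)` satisfies `W' ≥ -α W`:
the descent inequality makes `‖σ‖` nonincreasing, so `‖σ(t)‖ ≤ ‖σ(0)‖`, and the gain `κ` is
chosen exactly so that `-⟪σ, σ'⟫ / α_c` absorbs both the disturbance `⟪∇h, σ⟫ ≥ -η ‖σ‖` and
the term `α ‖σ‖² / (2 α_c)`. Hence `e^{α t} W(t)` is nondecreasing, and `W(0) > 0` by the
choice of `α_c`, so `W` stays positive.
-/

open RealInnerProductSpace Real Set

theorem antitoneOn_norm_of_inner_deriv_nonpos {F : Type*} [NormedAddCommGroup F]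
    [InnerProductSpace ℝ F] {f : ℝ → F} {a : ℝ} (hf : Differentiable ℝ f)
    (hderiv : ∀ t > a, ⟪f t, deriv f t⟫ ≤ 0) : AntitoneOn (fun t => ‖f t‖) (Ici a) := by
  have hsq : AntitoneOn (fun t => ‖f t‖ ^ 2) (Ici a) := by
    refine antitoneOn_of_hasDerivWithinAt_nonpos (convex_Ici a)
      (hf.continuous.norm.pow 2).continuousOn
      (fun t _ => (hf t).hasDerivAt.norm_sq.hasDerivWithinAt) fun t ht => ?_
    rw [interior_Ici] at ht
    nlinarith [hderiv t ht]
  exact fun s hs t ht hst => (sq_le_sq₀ (norm_nonneg _) (norm_nonneg _)).1 (hsq hs ht hst)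

theorem pos_of_neg_mul_le_deriv {W W' : ℝ → ℝ} {α a : ℝ} (hW : ∀ t, HasDerivAt W (W' t) t)
    (hderiv : ∀ t > a, -α * W t ≤ W' t) (ha : 0 < W a) : ∀ t ≥ a, 0 < W t := by
  have hexpW : ∀ t, HasDerivAt (fun s => exp (α * s) * W s)
      (exp (α * t) * (α * W t + W' t)) t := fun t => by
    have hlin : HasDerivAt (fun s => α * s) α t := by simpa using (hasDerivAt_id t).const_mul α
    exact (hlin.exp.mul (hW t)).congr_deriv (by ring)
  have hmono : MonotoneOn (fun s => exp (α * s) * W s) (Ici a) := by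
    refine monotoneOn_of_hasDerivWithinAt_nonneg (convex_Ici a)
      (fun t _ => (hexpW t).continuousAt.continuousWithinAt)
      (fun t _ => (hexpW t).hasDerivWithinAt) fun t ht => ?_
    rw [interior_Ici] at ht
    have := hderiv t ht
    exact mul_nonneg (exp_pos _).le (by linarith)
  intro t ht
  have hle := hmono self_mem_Ici ht ht
  exact pos_of_mul_pos_right ((mul_pos (exp_pos _) ha).trans_le hle) (exp_pos _).le

theorem neg_mul_sub_le_inner_add_sub_inner_div {E : Type*} [NormedAddCommGroup E]
    [InnerProductSpace ℝ E] {g v σ σ' : E} {H α η αc s₀ : ℝ} (hα : 0 ≤ α) (hαc : 0 < αc)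
    (hg : ‖g‖ ≤ η) (hcbf : -α * H ≤ ⟪g, v⟫) (hσ : ‖σ‖ ≤ s₀)
    (hdesc : ⟪σ, σ'⟫ ≤ -(α / 2 * s₀ + αc * η) * ‖σ‖) :
    -α * (H - ‖σ‖ ^ 2 / (2 * αc)) ≤ ⟪g, σ + v⟫ - ⟪σ, σ'⟫ / αc := by
  have hgσ : -(η * ‖σ‖) ≤ ⟪g, σ⟫ :=
    (neg_le_neg (mul_le_mul_of_nonneg_right hg (norm_nonneg σ))).trans
      (neg_le_of_abs_le (abs_real_inner_le_norm g σ))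
  have hsq : α / 2 * ‖σ‖ ^ 2 ≤ α / 2 * s₀ * ‖σ‖ := by
    rw [sq, mul_assoc]
    exact mul_le_mul_of_nonneg_left (mul_le_mul_of_nonneg_right hσ (norm_nonneg σ)) (by linarith)
  have hσ' : α * ‖σ‖ ^ 2 / (2 * αc) + η * ‖σ‖ ≤ -⟪σ, σ'⟫ / αc := by
    rw [le_div_iff₀ hαc]
    field_simp
    nlinarith
  have hexpand : -α * (H - ‖σ‖ ^ 2 / (2 * αc)) = -α * H + α * ‖σ‖ ^ 2 / (2 * αc) := by ring
  rw [neg_div] at hσ'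
  rw [inner_add_right, hexpand]
  linarith

/-- Proposition 1: safe reaching phase. If `v` satisfies the CBF condition
`⟨∇h(y), v(y)⟩ ≥ −α h(y)` with `‖∇h(y)‖ ≤ η`, the trajectory satisfies
`x′ = σ + v(x)`, `h(x(0)) > 0`, and the sliding variable satisfies the descent
inequality with gain `κ = (α/2)‖σ(0)‖ + α_c η`, where
`α_c = (‖σ(0)‖² + β)/(2 h(x(0)))`, then `h(x(t)) ≥ ‖σ(t)‖²/(2 α_c) ≥ 0` for all `t ≥ 0`. -/
theorem stmt5 {E : Type*} [NormedAddCommGroup E] [InnerProductSpace ℝ E]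
    (h : E → ℝ) (gradh : E → E) (hgrad : ∀ y, HasFDerivAt h (innerSL ℝ (gradh y)) y)
    (v : E → E) (α η : ℝ) (hα : 0 < α) (hη : 0 ≤ η)
    (hgradbd : ∀ y, ‖gradh y‖ ≤ η)
    (hCBF : ∀ y, ⟪gradh y, v y⟫ ≥ -α * h y)
    (β : ℝ) (hβ : 0 < β)
    (x σ : ℝ → E) (hx : Differentiable ℝ x) (hσ : Differentiable ℝ σ)
    (hdyn : ∀ t ≥ (0 : ℝ), deriv x t = σ t + v (x t))
    (h0 : h (x 0) > 0)
    (αc κ : ℝ) (hαc : αc = (‖σ 0‖ ^ 2 + β) / (2 * h (x 0)))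
    (hκ : κ = α / 2 * ‖σ 0‖ + αc * η)
    (hdesc : ∀ t ≥ (0 : ℝ), ⟪σ t, deriv σ t⟫ ≤ -κ * ‖σ t‖) :
    ∀ t ≥ (0 : ℝ), h (x t) ≥ ‖σ t‖ ^ 2 / (2 * αc) ∧ ‖σ t‖ ^ 2 / (2 * αc) ≥ 0 := by
  have hαc_pos : 0 < αc := by rw [hαc]; positivity
  have hκ_nonneg : 0 ≤ κ := by rw [hκ]; positivity
  have hσ_le : ∀ t ≥ (0 : ℝ), ‖σ t‖ ≤ ‖σ 0‖ := fun t ht =>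
    antitoneOn_norm_of_inner_deriv_nonpos hσ
      (fun s hs => (hdesc s hs.le).trans
        (mul_nonpos_of_nonpos_of_nonneg (neg_nonpos.2 hκ_nonneg) (norm_nonneg _)))
      self_mem_Ici ht ht
  set W : ℝ → ℝ := fun t => h (x t) - ‖σ t‖ ^ 2 / (2 * αc)
  have hW : ∀ t, HasDerivAt W (⟪gradh (x t), deriv x t⟫ - ⟪σ t, deriv σ t⟫ / αc) t := fun t => by
    refine (((hgrad (x t)).comp_hasDerivAt t (hx t).hasDerivAt).sub
      ((hσ t).hasDerivAt.norm_sq.div_const (2 * αc))).congr_deriv ?_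
    rw [innerSL_apply_apply]
    field_simp
  have hW_deriv : ∀ t > (0 : ℝ), -α * W t ≤ ⟪gradh (x t), deriv x t⟫ - ⟪σ t, deriv σ t⟫ / αc :=
    fun t ht => by
      rw [hdyn t ht.le]
      exact neg_mul_sub_le_inner_add_sub_inner_div hα.le hαc_pos (hgradbd _) (hCBF _)
        (hσ_le t ht.le) (hκ ▸ hdesc t ht.le)
  have hW0 : 0 < W 0 := by
    have : ‖σ 0‖ ^ 2 / (2 * αc) < h (x 0) := by
      rw [div_lt_iff₀ (by positivity), hαc]
      field_simp
      linarith
    exact sub_pos.2 this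
  intro t ht
  have := pos_of_neg_mul_le_deriv hW hW_deriv hW0 t ht
  exact ⟨by linarith, by positivity⟩
end

section
/- Let E be a real inner product space, let h : E → ℝ be differentiable with gradient ∇h, let v : E → E, and let α > 0, η > 0, γ > 0, ε > 0 with ε ≤ αγ/η, and suppose ‖∇h(y)‖ ≤ η and ⟨∇h(y), v(y)⟩ ≥ −α h(y) for all y ∈ E. Let τ ≥ 0, let x : ℝ → E be differentiable and ξ : ℝ → E be such that x′(t) = v(x(t)) + ξ(t) and ‖ξ(t)‖ ≤ ε for all t ≥ τ. If h(x(τ)) + γ ≥ 0, then h(x(t)) + γ ≥ 0 for all t ≥ τ. -/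
/-!
Along the trajectory, `f(t) = h(x(t)) + γ` satisfies `f' = ⟪∇h, v + ξ⟫ ≥ -α h - η ε ≥ -α f`,
since `η ε ≤ α γ`. Hence `f(t) e^{α t}` is nondecreasing, so `f` cannot become negative.
-/

open RealInnerProductSpace Set

theorem nonneg_of_hasDerivAt_ge_neg_mul_self {f f' : ℝ → ℝ} {α τ : ℝ}
    (hf : ∀ t ≥ τ, HasDerivAt f (f' t) t) (hf' : ∀ t ≥ τ, -α * f t ≤ f' t)
    (h₀ : 0 ≤ f τ) : ∀ t ≥ τ, 0 ≤ f t := by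
  set g : ℝ → ℝ := fun t => f t * Real.exp (α * t)
  have hg : ∀ t ≥ τ, HasDerivAt g ((f' t + α * f t) * Real.exp (α * t)) t := fun t ht => by
    have hexp : HasDerivAt (fun t => Real.exp (α * t)) (Real.exp (α * t) * α) t := by
      simpa using ((hasDerivAt_id t).const_mul α).exp
    exact ((hf t ht).mul hexp).congr_deriv (by ring)
  have hmono : MonotoneOn g (Ici τ) :=
    monotoneOn_of_hasDerivWithinAt_nonneg (convex_Ici τ)
      (fun t ht => (hg t ht).continuousAt.continuousWithinAt)
      (fun t ht => (hg t (interior_subset ht)).hasDerivWithinAt)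
      (fun t ht => mul_nonneg (by linarith [hf' t (interior_subset ht)]) (Real.exp_pos _).le)
  intro t ht
  have hgt : 0 ≤ g t := (mul_nonneg h₀ (Real.exp_pos _).le).trans (hmono self_mem_Ici ht ht)
  exact nonneg_of_mul_nonneg_left hgt (Real.exp_pos _)

theorem neg_mul_add_le_inner_add {E : Type*} [NormedAddCommGroup E] [InnerProductSpace ℝ E]
    {g w ξ : E} {c α γ η ε : ℝ} (hg : ‖g‖ ≤ η) (hξ : ‖ξ‖ ≤ ε) (hηε : η * ε ≤ α * γ)
    (hw : -α * c ≤ ⟪g, w⟫) : -α * (c + γ) ≤ ⟪g, w + ξ⟫ := by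
  have hgξ : -(η * ε) ≤ ⟪g, ξ⟫ := by
    have := mul_le_mul hg hξ (norm_nonneg ξ) ((norm_nonneg g).trans hg)
    linarith [neg_abs_le ⟪g, ξ⟫, abs_real_inner_le_norm g ξ]
  rw [inner_add_right]
  linarith

theorem stmt13_general {E : Type*} [NormedAddCommGroup E] [InnerProductSpace ℝ E]
    (h : E → ℝ) (gradh : E → E) (hgrad : ∀ y, HasFDerivAt h (innerSL ℝ (gradh y)) y)
    (v : E → E) (α η γ ε : ℝ) (hη : 0 < η)
    (hεγ : ε ≤ α * γ / η)
    (hgradbd : ∀ y, ‖gradh y‖ ≤ η)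
    (hCBF : ∀ y, ⟪gradh y, v y⟫ ≥ -α * h y)
    (τ : ℝ) (x : ℝ → E) (hx : Differentiable ℝ x) (ξ : ℝ → E)
    (hdyn : ∀ t ≥ τ, deriv x t = v (x t) + ξ t)
    (hξ : ∀ t ≥ τ, ‖ξ t‖ ≤ ε)
    (h0 : h (x τ) + γ ≥ 0) :
    ∀ t ≥ τ, h (x t) + γ ≥ 0 := by
  have hηε : η * ε ≤ α * γ := by rwa [le_div_iff₀' hη] at hεγ
  have hderiv : ∀ t, HasDerivAt (fun s => h (x s) + γ) ⟪gradh (x t), deriv x t⟫ t := fun t =>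
    ((hgrad (x t)).comp_hasDerivAt t (hx t).hasDerivAt).add_const γ
  refine nonneg_of_hasDerivAt_ge_neg_mul_self (α := α) (fun t _ => hderiv t) (fun t ht => ?_) h0
  rw [hdyn t ht]
  exact neg_mul_add_le_inner_add (hgradbd _) (hξ t ht) hηε (hCBF _)

/-- Second part of Theorem 2: on the real sliding manifold, where `x′ = v(x) + ξ` with
`‖ξ‖ ≤ ε ≤ αγ/η`, the trajectory remains in the inflated safe set `C_γ = {h + γ ≥ 0}`. -/
theorem stmt13 {E : Type*} [NormedAddCommGroup E] [InnerProductSpace ℝ E]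
    (h : E → ℝ) (gradh : E → E) (hgrad : ∀ y, HasFDerivAt h (innerSL ℝ (gradh y)) y)
    (v : E → E) (α η γ ε : ℝ) (hα : 0 < α) (hη : 0 < η) (hγ : 0 < γ) (hε : 0 < ε)
    (hεγ : ε ≤ α * γ / η)
    (hgradbd : ∀ y, ‖gradh y‖ ≤ η)
    (hCBF : ∀ y, ⟪gradh y, v y⟫ ≥ -α * h y)
    (τ : ℝ) (hτ : 0 ≤ τ) (x : ℝ → E) (hx : Differentiable ℝ x) (ξ : ℝ → E)
    (hdyn : ∀ t ≥ τ, deriv x t = v (x t) + ξ t)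
    (hξ : ∀ t ≥ τ, ‖ξ t‖ ≤ ε)
    (h0 : h (x τ) + γ ≥ 0) :
    ∀ t ≥ τ, h (x t) + γ ≥ 0 :=
  stmt13_general h gradh hgrad v α η γ ε hη hεγ hgradbd hCBF τ x hx ξ hdyn hξ h0
end

section
/- Let E be a real inner product space and let h : E → ℝ be differentiable with gradient ∇h. Let v : E → E, and let α > 0, η ≥ 0, γ > 0 be such that ‖∇h(y)‖ ≤ η and ⟨∇h(y), v(y)⟩ ≥ −α h(y) for all y ∈ E. Let x, σ : ℝ → E be differentiable with x′(t) = σ(t) + v(x(t)) for all t ≥ 0, let α_c > 0 satisfy −(1/2)‖σ(0)‖² + α_c (h(x(0)) + γ) > 0, let κ ≥ (α/2)‖σ(0)‖ + α_c η, and suppose ⟨σ(t), σ′(t)⟩ ≤ −κ ‖σ(t)‖ for all t ≥ 0. Then h(x(t)) + γ ≥ ‖σ(t)‖²/(2 α_c) ≥ 0 for all t ≥ 0. -/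
/-!
Let `h_{cγ} = -½‖σ‖² + α_c (h ∘ x + γ)`. Along the flow, `⟪σ, σ'⟫ ≤ -κ‖σ‖ ≤ 0`, so `‖σ‖` never
exceeds `‖σ(0)‖`; this, the gradient bound and the CBF condition on `v` give
`ḣ_{cγ} ≥ -α h_{cγ}`. By Grönwall, `h_{cγ}(t) ≥ e^{-αt} h_{cγ}(0) > 0`, which is the claim
after dividing by `α_c`.
-/

open RealInnerProductSpace Set Real

theorem mul_exp_le_of_neg_mul_le_deriv {f f' : ℝ → ℝ} {α : ℝ}
    (hf : ∀ t ≥ (0 : ℝ), HasDerivAt f (f' t) t) (hbound : ∀ t ≥ (0 : ℝ), -α * f t ≤ f' t)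
    {t : ℝ} (ht : 0 ≤ t) : f 0 * exp (-α * t) ≤ f t := by
  have hcont : ContinuousOn (fun s => -f s) (Icc 0 t) :=
    fun s hs => (hf s hs.1).continuousAt.continuousWithinAt.neg
  have key := le_gronwallBound_of_liminf_deriv_right_le (f' := fun s => -f' s) (δ := -f 0)
    (K := -α) (ε := 0) hcont
    (fun s hs _ hr => ((hf s hs.1).hasDerivWithinAt.neg).liminf_right_slope_le hr) le_rfl
    (fun s hs => by linarith [hbound s hs.1]) t ⟨ht, le_rfl⟩
  rw [gronwallBound_ε0, sub_zero] at key
  linarith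

section InnerProductSpace

variable {E : Type*} [NormedAddCommGroup E] [InnerProductSpace ℝ E]

theorem antitoneOn_norm_of_inner_deriv_nonpos_s14 {σ σ' : ℝ → E}
    (hσ : ∀ t ≥ (0 : ℝ), HasDerivAt σ (σ' t) t) (hdesc : ∀ t > (0 : ℝ), ⟪σ t, σ' t⟫ ≤ 0) :
    AntitoneOn (fun t => ‖σ t‖) (Ici 0) := by
  have hsq : AntitoneOn (fun t => ‖σ t‖ ^ 2) (Ici 0) := by
    refine antitoneOn_of_hasDerivWithinAt_nonpos (f' := fun t => 2 * ⟪σ t, σ' t⟫)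
      (convex_Ici 0) (fun t ht => (hσ t ht).norm_sq.continuousAt.continuousWithinAt) ?_ ?_
    · intro t ht
      rw [interior_Ici] at ht
      exact (hσ t (le_of_lt ht)).norm_sq.hasDerivWithinAt
    · intro t ht
      rw [interior_Ici] at ht
      linarith [hdesc t ht]
  intro s hs t ht hst
  exact (pow_le_pow_iff_left₀ (norm_nonneg _) (norm_nonneg _) two_ne_zero).1 (hsq hs ht hst)

/-- `ḣ_{cγ} ≥ -α h_{cγ}` at one instant, with `g = ∇h(x)`, `w = v(x)`, `H = h(x)`, `s = σ`,
`s' = σ'` and `r = ‖σ(0)‖`. -/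
theorem neg_mul_barrier_le_barrier_deriv {α η γ αc κ r H : ℝ} {g w s s' : E}
    (hα : 0 ≤ α) (hγ : 0 ≤ γ) (hαc : 0 ≤ αc) (hg : ‖g‖ ≤ η) (hgw : -α * H ≤ ⟪g, w⟫)
    (hκ : α / 2 * r + αc * η ≤ κ) (hs : ‖s‖ ≤ r) (hss' : ⟪s, s'⟫ ≤ -κ * ‖s‖) :
    -α * (-(1 / 2) * ‖s‖ ^ 2 + αc * (H + γ)) ≤ -⟪s, s'⟫ + αc * ⟪g, s + w⟫ := by
  have hsnn := norm_nonneg s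
  have hgs : -(η * ‖s‖) ≤ ⟪g, s⟫ := calc
    -(η * ‖s‖) ≤ -(‖g‖ * ‖s‖) := by gcongr
    _ ≤ ⟪g, s⟫ := neg_le_of_abs_le (abs_real_inner_le_norm g s)
  rw [inner_add_right]
  nlinarith [mul_le_mul_of_nonneg_right hκ hsnn, mul_le_mul_of_nonneg_left hgs hαc,
    mul_le_mul_of_nonneg_left hgw hαc, mul_nonneg (mul_nonneg hα hsnn) (sub_nonneg.2 hs),
    mul_nonneg (mul_nonneg hα hαc) hγ]

/-- The paper's `h_{cγ}` along a trajectory. -/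
noncomputable def reachingBarrier (h : E → ℝ) (x σ : ℝ → E) (αc γ t : ℝ) : ℝ :=
  -(1 / 2) * ‖σ t‖ ^ 2 + αc * (h (x t) + γ)

theorem hasDerivAt_reachingBarrier {h : E → ℝ} {gradh : E → E} {x σ : ℝ → E} {x' σ' : E}
    {αc γ t : ℝ} (hgrad : HasFDerivAt h (innerSL ℝ (gradh (x t))) (x t))
    (hx : HasDerivAt x x' t) (hσ : HasDerivAt σ σ' t) :
    HasDerivAt (reachingBarrier h x σ αc γ) (-⟪σ t, σ'⟫ + αc * ⟪gradh (x t), x'⟫) t := by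
  have hhx : HasDerivAt (fun s => h (x s)) ⟪gradh (x t), x'⟫ t := hgrad.comp_hasDerivAt t hx
  exact ((hσ.norm_sq.const_mul (-(1 / 2))).add ((hhx.add_const γ).const_mul αc)).congr_deriv
    (by ring)

end InnerProductSpace

/-- First part of Theorem 2: safety during the reaching phase with respect to the inflated
safe set `C_γ = {h + γ ≥ 0}`: `h(x(t)) + γ ≥ ‖σ(t)‖²/(2 α_c) ≥ 0` for all `t ≥ 0`. -/
theorem stmt14 {E : Type*} [NormedAddCommGroup E] [InnerProductSpace ℝ E]
    (h : E → ℝ) (gradh : E → E) (hgrad : ∀ y, HasFDerivAt h (innerSL ℝ (gradh y)) y)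
    (v : E → E) (α η γ : ℝ) (hα : 0 < α) (hη : 0 ≤ η) (hγ : 0 < γ)
    (hgradbd : ∀ y, ‖gradh y‖ ≤ η)
    (hCBF : ∀ y, ⟪gradh y, v y⟫ ≥ -α * h y)
    (x σ : ℝ → E) (hx : Differentiable ℝ x) (hσ : Differentiable ℝ σ)
    (hdyn : ∀ t ≥ (0 : ℝ), deriv x t = σ t + v (x t))
    (αc : ℝ) (hαc : 0 < αc)
    (h0 : -(1 / 2) * ‖σ 0‖ ^ 2 + αc * (h (x 0) + γ) > 0)
    (κ : ℝ) (hκ : κ ≥ α / 2 * ‖σ 0‖ + αc * η)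
    (hdesc : ∀ t ≥ (0 : ℝ), ⟪σ t, deriv σ t⟫ ≤ -κ * ‖σ t‖) :
    ∀ t ≥ (0 : ℝ), h (x t) + γ ≥ ‖σ t‖ ^ 2 / (2 * αc) ∧ ‖σ t‖ ^ 2 / (2 * αc) ≥ 0 := by
  intro t ht
  have hκ0 : 0 ≤ κ := le_trans (by positivity) hκ
  have hnorm : ∀ s ≥ (0 : ℝ), ‖σ s‖ ≤ ‖σ 0‖ := fun s hs =>
    antitoneOn_norm_of_inner_deriv_nonpos_s14 (fun s _ => (hσ s).hasDerivAt)
      (fun s hs => (hdesc s hs.le).trans (by nlinarith [norm_nonneg (σ s)])) self_mem_Ici hs hs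
  have hderiv : ∀ s ≥ (0 : ℝ), HasDerivAt (reachingBarrier h x σ αc γ)
      (-⟪σ s, deriv σ s⟫ + αc * ⟪gradh (x s), deriv x s⟫) s := fun s _ =>
    hasDerivAt_reachingBarrier (hgrad _) (hx s).hasDerivAt (hσ s).hasDerivAt
  have hbound : ∀ s ≥ (0 : ℝ), -α * reachingBarrier h x σ αc γ s ≤
      -⟪σ s, deriv σ s⟫ + αc * ⟪gradh (x s), deriv x s⟫ := fun s hs => by
    rw [hdyn s hs]
    exact neg_mul_barrier_le_barrier_deriv hα.le hγ.le hαc.le (hgradbd _) (hCBF _) hκ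
      (hnorm s hs) (hdesc s hs)
  have hpos : 0 < reachingBarrier h x σ αc γ t :=
    (mul_pos h0 (exp_pos _)).trans_le (mul_exp_le_of_neg_mul_le_deriv hderiv hbound ht)
  refine ⟨?_, by positivity⟩
  rw [ge_iff_le, div_le_iff₀ (by positivity)]
  unfold reachingBarrier at hpos
  linarith
end

section
/- Let E be a real inner product space and let h : E → ℝ be differentiable with gradient ∇h. Let v : E → E, and let α > 0, η ≥ 0, β > 0 be such that ‖∇h(y)‖ ≤ η and ⟨∇h(y), v(y)⟩ ≥ −α h(y) for all y ∈ E. Let x, σ : ℝ → E be differentiable with x′(t) = σ(t) + v(x(t)) for all t ≥ 0, suppose h(x(0)) > 0, set α_c = (‖σ(0)‖² + β)/(2 h(x(0))) and κ = (α/2)‖σ(0)‖ + α_c η, assume κ > 0, and suppose ⟨σ(t), σ′(t)⟩ ≤ −κ ‖σ(t)‖ for all t ≥ 0. Then (i) h(x(t)) ≥ 0 for all t ≥ 0, and (ii) σ(t) = 0, and hence x′(t) = v(x(t)), for all t ≥ √2 ‖σ(0)‖ / κ. -/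
/-!
The sliding variable obeys `d/dt ‖σ‖ ≤ -κ` while it is nonzero, so `‖σ t‖ ≤ ‖σ 0‖ - κ t` and
`σ` vanishes from time `‖σ 0‖ / κ ≤ √2 ‖σ 0‖ / κ` on, after which `x' = v(x)`.

Safety comes from the barrier `B = h(x) - ‖σ‖² / (2 αc)`. Along the flow
`B' = ⟪∇h, σ⟫ + ⟪∇h, v⟫ - ⟪σ, σ'⟫ / αc`, and the choice of `κ` makes the reaching term
`-⟪σ, σ'⟫ / αc` pay both for `⟪∇h, σ⟫ ≥ -η ‖σ‖` and for the gap `α ‖σ‖ ‖σ 0‖ / (2 αc)`,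
which dominates `α ‖σ‖² / (2 αc)` because `‖σ‖` is nonincreasing. Hence `B' ≥ -α B`, so `B`
stays positive since `B 0 = β / (2 αc) > 0`, and `h(x) ≥ B`.
-/

open Set RealInnerProductSpace

section

variable {E : Type*} [NormedAddCommGroup E] [InnerProductSpace ℝ E]

theorem HasDerivAt.norm {f : ℝ → E} {f' : E} {t : ℝ} (hf : HasDerivAt f f' t) (h0 : f t ≠ 0) :
    HasDerivAt (‖f ·‖) (⟪f t, f'⟫ / ‖f t‖) t := by
  have hsqrt := hf.norm_sq.sqrt (by positivity)
  simp only [Real.sqrt_sq (norm_nonneg _)] at hsqrt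
  convert hsqrt using 1
  field_simp

theorem antitoneOn_norm_of_inner_deriv_nonpos_s15 {f : ℝ → E} (hf : Differentiable ℝ f)
    (hdesc : ∀ t > 0, ⟪f t, deriv f t⟫ ≤ 0) : AntitoneOn (‖f ·‖) (Ici 0) := by
  have hsq : AntitoneOn (‖f ·‖ ^ 2) (Ici 0) := by
    refine antitoneOn_of_deriv_nonpos (convex_Ici 0) (hf.norm_sq ℝ).continuous.continuousOn
      (hf.norm_sq ℝ).differentiableOn fun t ht => ?_
    rw [interior_Ici] at ht
    rw [(hf t).hasDerivAt.norm_sq.deriv]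
    linarith [hdesc t ht]
  intro a ha b hb hab
  exact (pow_le_pow_iff_left₀ (norm_nonneg _) (norm_nonneg _) two_ne_zero).1 (hsq ha hb hab)

theorem eq_zero_of_inner_deriv_le_neg_mul_norm {f : ℝ → E} {κ : ℝ} (hf : Differentiable ℝ f)
    (hκ : 0 < κ) (hdesc : ∀ t ≥ 0, ⟪f t, deriv f t⟫ ≤ -κ * ‖f t‖) {t : ℝ}
    (ht : ‖f 0‖ / κ ≤ t) : f t = 0 := by
  by_contra hne
  have ht0 : 0 ≤ t := le_trans (by positivity) ht
  have hanti := antitoneOn_norm_of_inner_deriv_nonpos_s15 hf fun s hs =>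
    (hdesc s hs.le).trans (by nlinarith [norm_nonneg (f s)])
  have hne_on : ∀ s ∈ Icc 0 t, f s ≠ 0 := fun s hs hs0 =>
    hne (norm_le_zero_iff.1 (by simpa [hs0] using hanti hs.1 ht0 hs.2))
  have hderiv : ∀ s ∈ interior (Icc 0 t), deriv (‖f ·‖) s ≤ -κ := by
    intro s hs
    rw [interior_Icc] at hs
    have hpos : 0 < ‖f s‖ := norm_pos_iff.2 (hne_on s (Ioo_subset_Icc_self hs))
    rw [((hf s).hasDerivAt.norm (hne_on s (Ioo_subset_Icc_self hs))).deriv, div_le_iff₀ hpos]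
    exact hdesc s hs.1.le
  have hmvt := (convex_Icc 0 t).image_sub_le_mul_sub_of_deriv_le hf.continuous.norm.continuousOn
    (fun s hs => ((hf s).norm ℝ (hne_on s (interior_subset hs))).differentiableWithinAt)
    hderiv 0 ⟨le_rfl, ht0⟩ t ⟨ht0, le_rfl⟩ ht0
  have hκt : ‖f 0‖ ≤ κ * t := (div_le_iff₀' hκ).1 ht
  linarith [norm_pos_iff.2 hne]

theorem pos_of_hasDerivAt_ge_neg_mul {B B' : ℝ → ℝ} {α : ℝ} (hB : ∀ t, HasDerivAt B (B' t) t)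
    (hB' : ∀ t > 0, -α * B t ≤ B' t) (h0 : 0 < B 0) {t : ℝ} (ht : 0 ≤ t) : 0 < B t := by
  have hG : ∀ s, HasDerivAt (fun s => Real.exp (α * s) * B s)
      (Real.exp (α * s) * (α * B s + B' s)) s := fun s =>
    ((hasDerivAt_const_mul α).exp.fun_mul (hB s)).congr_deriv (by ring)
  have hmono : MonotoneOn (fun s => Real.exp (α * s) * B s) (Ici 0) := by
    refine monotoneOn_of_deriv_nonneg (convex_Ici 0)
      (fun s _ => (hG s).continuousAt.continuousWithinAt)
      (fun s _ => (hG s).differentiableAt.differentiableWithinAt) fun s hs => ?_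
    rw [interior_Ici] at hs
    rw [(hG s).deriv]
    exact mul_nonneg (Real.exp_pos _).le (by linarith [hB' s hs])
  have := hmono self_mem_Ici ht ht
  simp only [mul_zero, Real.exp_zero, one_mul] at this
  exact pos_of_mul_pos_right (h0.trans_le this) (Real.exp_pos _).le

/-- The inequality `B' ≥ -α B` at one instant, for `G = ∇h(x)`, `w = v(x)` and `H = h(x)`. -/
theorem barrier_deriv_ge {G s s' w : E} {H α η c r : ℝ} (hα : 0 ≤ α) (hc : 0 < c)
    (hG : ‖G‖ ≤ η) (hCBF : -α * H ≤ ⟪G, w⟫) (hs : ‖s‖ ≤ r)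
    (hdesc : ⟪s, s'⟫ ≤ -(α / 2 * r + c * η) * ‖s‖) :
    -α * (H - ‖s‖ ^ 2 / (2 * c)) ≤ ⟪G, s + w⟫ - 2 * ⟪s, s'⟫ / (2 * c) := by
  have hGs : -(η * ‖s‖) ≤ ⟪G, s⟫ :=
    le_trans (by gcongr) (abs_le.1 (abs_real_inner_le_norm G s)).1
  have hreach : α * ‖s‖ ^ 2 / (2 * c) + η * ‖s‖ ≤ -(2 * ⟪s, s'⟫ / (2 * c)) := by
    rw [← neg_div, div_add' _ _ _ (by positivity), div_le_div_iff_of_pos_right (by positivity)]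
    nlinarith [mul_le_mul_of_nonneg_left hs (mul_nonneg hα (norm_nonneg s))]
  rw [inner_add_right]
  linarith [mul_div_assoc α (‖s‖ ^ 2) (2 * c)]

end

theorem stmt15_general {E : Type*} [NormedAddCommGroup E] [InnerProductSpace ℝ E]
    (h : E → ℝ) (gradh : E → E) (hgrad : ∀ y, HasFDerivAt h (innerSL ℝ (gradh y)) y)
    (v : E → E) (α η β : ℝ) (hα : 0 < α) (hβ : 0 < β)
    (hgradbd : ∀ y, ‖gradh y‖ ≤ η)
    (hCBF : ∀ y, ⟪gradh y, v y⟫ ≥ -α * h y)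
    (x σ : ℝ → E) (hx : Differentiable ℝ x) (hσ : Differentiable ℝ σ)
    (hdyn : ∀ t ≥ (0 : ℝ), deriv x t = σ t + v (x t))
    (h0 : h (x 0) > 0)
    (αc κ : ℝ) (hαc : αc = (‖σ 0‖ ^ 2 + β) / (2 * h (x 0)))
    (hκdef : κ = α / 2 * ‖σ 0‖ + αc * η) (hκ : 0 < κ)
    (hdesc : ∀ t ≥ (0 : ℝ), ⟪σ t, deriv σ t⟫ ≤ -κ * ‖σ t‖) :
    (∀ t ≥ (0 : ℝ), h (x t) ≥ 0) ∧
      (∀ t ≥ Real.sqrt 2 * ‖σ 0‖ / κ, σ t = 0 ∧ deriv x t = v (x t)) := by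
  have hαc_pos : 0 < αc := by rw [hαc]; positivity
  have hσ_anti := antitoneOn_norm_of_inner_deriv_nonpos_s15 hσ fun t ht =>
    (hdesc t ht.le).trans (by nlinarith [norm_nonneg (σ t)])
  refine ⟨fun t ht => ?_, fun t ht => ?_⟩
  · set B : ℝ → ℝ := fun t => h (x t) - ‖σ t‖ ^ 2 / (2 * αc)
    have hB : ∀ t, HasDerivAt B (⟪gradh (x t), deriv x t⟫ - 2 * ⟪σ t, deriv σ t⟫ / (2 * αc)) t :=
      fun t => ((hgrad (x t)).comp_hasDerivAt t (hx t).hasDerivAt).sub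
        ((hσ t).hasDerivAt.norm_sq.div_const _)
    have hB' : ∀ t > 0, -α * B t ≤ ⟪gradh (x t), deriv x t⟫ - 2 * ⟪σ t, deriv σ t⟫ / (2 * αc) :=
      fun t ht => by
        rw [hdyn t ht.le]
        exact barrier_deriv_ge hα.le hαc_pos (hgradbd _) (hCBF _) (hσ_anti self_mem_Ici ht.le ht.le)
          (hκdef ▸ hdesc t ht.le)
    have hB0 : 0 < B 0 := by
      rw [sub_pos, div_lt_iff₀ (by positivity), hαc]
      field_simp
      linarith
    have hBt := pos_of_hasDerivAt_ge_neg_mul hB hB' hB0 ht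
    have hσt : 0 ≤ ‖σ t‖ ^ 2 / (2 * αc) := by positivity
    linarith
  · have hT : ‖σ 0‖ / κ ≤ t := by
      refine le_trans ?_ ht
      gcongr
      exact le_mul_of_one_le_left (norm_nonneg _) Real.one_lt_sqrt_two.le
    have hσt := eq_zero_of_inner_deriv_le_neg_mul_norm hσ hκ hdesc hT
    exact ⟨hσt, by rw [hdyn t (le_trans (by positivity) hT), hσt, zero_add]⟩

/-- Corollary 1: the closed-loop trajectory never leaves the safe set `{h ≥ 0}` and reaches
the safe sliding domain in finite time `T = √2 ‖σ(0)‖ / κ`, after which `x′ = v(x)`. -/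
theorem stmt15 {E : Type*} [NormedAddCommGroup E] [InnerProductSpace ℝ E]
    (h : E → ℝ) (gradh : E → E) (hgrad : ∀ y, HasFDerivAt h (innerSL ℝ (gradh y)) y)
    (v : E → E) (α η β : ℝ) (hα : 0 < α) (hη : 0 ≤ η) (hβ : 0 < β)
    (hgradbd : ∀ y, ‖gradh y‖ ≤ η)
    (hCBF : ∀ y, ⟪gradh y, v y⟫ ≥ -α * h y)
    (x σ : ℝ → E) (hx : Differentiable ℝ x) (hσ : Differentiable ℝ σ)
    (hdyn : ∀ t ≥ (0 : ℝ), deriv x t = σ t + v (x t))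
    (h0 : h (x 0) > 0)
    (αc κ : ℝ) (hαc : αc = (‖σ 0‖ ^ 2 + β) / (2 * h (x 0)))
    (hκdef : κ = α / 2 * ‖σ 0‖ + αc * η) (hκ : 0 < κ)
    (hdesc : ∀ t ≥ (0 : ℝ), ⟪σ t, deriv σ t⟫ ≤ -κ * ‖σ t‖) :
    (∀ t ≥ (0 : ℝ), h (x t) ≥ 0) ∧
      (∀ t ≥ Real.sqrt 2 * ‖σ 0‖ / κ, σ t = 0 ∧ deriv x t = v (x t)) :=
  stmt15_general h gradh hgrad v α η β hα hβ hgradbd hCBF x σ hx hσ hdyn h0 αc κ hαc hκdef hκ hdesc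
end

section
/- Let E be a real inner product space, let τ ≥ 0, ε > 0, μ > −1, ρ ≥ 0, and let σ : ℝ → E be differentiable such that for every t ≥ τ with ε/2 ≤ ‖σ(t)‖ < ε one has ⟨σ(t), σ′(t)⟩ ≤ −(1 + μ) ‖σ(t)‖²/(ε − ‖σ(t)‖) + ρ ‖σ(t)‖. If ‖σ(τ)‖ ≤ ε/2, then ‖σ(t)‖ < ε for all t ≥ τ. -/
/-!
Put `c = max (ε / 2) (ρ ε / (1 + μ + ρ))`, which is `< ε`. Once `c ≤ ‖σ‖ < ε`, the barrier term
`(1 + μ) ‖σ‖² / (ε - ‖σ‖)` dominates `ρ ‖σ‖`, so `‖σ‖²` is non-increasing there. A trajectory that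
starts at or below `c` and later reaches `ε` would have to cross the band `(c, ε)` on an interval
where `‖σ‖²` cannot increase, which is absurd.
-/

open RealInnerProductSpace Set

theorem exists_crossing_of_continuous {f : ℝ → ℝ} (hf : Continuous f) {a t c B : ℝ}
    (hat : a ≤ t) (ha : f a ≤ c) (ht : B ≤ f t) :
    ∃ t₀ t₁, a ≤ t₀ ∧ t₀ ≤ t₁ ∧ f t₀ ≤ c ∧ B ≤ f t₁ ∧ ∀ s ∈ Ioo t₀ t₁, c < f s ∧ f s < B := by
  set S := Icc a t ∩ {s | B ≤ f s}
  have hSbdd : BddBelow S := ⟨a, fun s hs => hs.1.1⟩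
  obtain ⟨⟨ha₁, -⟩, ht₁⟩ : sInf S ∈ S :=
    (isClosed_Icc.inter (isClosed_le continuous_const hf)).csInf_mem ⟨t, ⟨hat, le_rfl⟩, ht⟩ hSbdd
  set T := Icc a (sInf S) ∩ {s | f s ≤ c}
  have hTbdd : BddAbove T := ⟨sInf S, fun s hs => hs.1.2⟩
  obtain ⟨⟨ha₀, h₀₁⟩, ht₀⟩ : sSup T ∈ T :=
    (isClosed_Icc.inter (isClosed_le hf continuous_const)).csSup_mem ⟨a, ⟨le_rfl, ha₁⟩, ha⟩ hTbdd
  refine ⟨sSup T, sInf S, ha₀, h₀₁, ht₀, ht₁, fun s ⟨hs₀, hs₁⟩ => ⟨?_, ?_⟩⟩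
  · by_contra! hs
    exact (le_csSup hTbdd ⟨⟨ha₀.trans hs₀.le, hs₁.le⟩, hs⟩).not_gt hs₀
  · have hst : s ≤ t := hs₁.le.trans (csInf_le hSbdd ⟨⟨hat, le_rfl⟩, ht⟩)
    by_contra! hs
    exact (csInf_le hSbdd ⟨⟨ha₀.trans hs₀.le, hst⟩, hs⟩).not_gt hs₁

theorem lt_of_deriv_nonpos_on_band {f : ℝ → ℝ} (hf : Differentiable ℝ f) {a c B : ℝ}
    (hcB : c < B) (ha : f a ≤ c) (hderiv : ∀ s ≥ a, c < f s → f s < B → deriv f s ≤ 0) :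
    ∀ t ≥ a, f t < B := by
  intro t hat
  by_contra! ht
  obtain ⟨t₀, t₁, ha₀, h₀₁, ht₀, ht₁, hband⟩ := exists_crossing_of_continuous hf.continuous hat ha ht
  have hanti : AntitoneOn f (Icc t₀ t₁) := by
    refine antitoneOn_of_deriv_nonpos (convex_Icc t₀ t₁) hf.continuous.continuousOn
      hf.differentiableOn fun s hs => ?_
    rw [interior_Icc] at hs
    exact hderiv s (ha₀.trans hs.1.le) (hband s hs).1 (hband s hs).2
  have := hanti ⟨le_rfl, h₀₁⟩ ⟨h₀₁, le_rfl⟩ h₀₁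
  linarith

theorem barrier_term_add_le_zero {ε μ ρ x : ℝ} (hx : 0 ≤ x) (hxε : x < ε)
    (hρx : ρ * ε ≤ (1 + μ + ρ) * x) :
    -(1 + μ) * x ^ 2 / (ε - x) + ρ * x ≤ 0 := by
  have hdom : ρ * x * (ε - x) ≤ (1 + μ) * x ^ 2 := by nlinarith
  have : ρ * x ≤ (1 + μ) * x ^ 2 / (ε - x) := (le_div_iff₀ (by linarith)).2 hdom
  rw [neg_mul, neg_div]
  linarith

theorem stmt17_general {E : Type*} [NormedAddCommGroup E] [InnerProductSpace ℝ E]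
    (τ ε μ ρ : ℝ) (hε : 0 < ε) (hμ : μ > -1) (hρ : 0 ≤ ρ)
    (σ : ℝ → E) (hσ : Differentiable ℝ σ)
    (hdesc : ∀ t ≥ τ, ε / 2 ≤ ‖σ t‖ → ‖σ t‖ < ε →
      ⟪σ t, deriv σ t⟫ ≤ -(1 + μ) * ‖σ t‖ ^ 2 / (ε - ‖σ t‖) + ρ * ‖σ t‖)
    (hinit : ‖σ τ‖ ≤ ε / 2) :
    ∀ t ≥ τ, ‖σ t‖ < ε := by
  have hμ' : 0 < 1 + μ := by linarith
  set c := max (ε / 2) (ρ * ε / (1 + μ + ρ))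
  have hcε : c < ε := max_lt (by linarith) ((div_lt_iff₀ (by linarith)).2 (by nlinarith))
  have hc₀ : 0 ≤ c := le_max_of_le_left (by linarith)
  have hV : ∀ s, HasDerivAt (‖σ ·‖ ^ 2) (2 * ⟪σ s, deriv σ s⟫) s :=
    fun s => (hσ s).hasDerivAt.norm_sq
  have hdecr : ∀ s ≥ τ, c ^ 2 < ‖σ s‖ ^ 2 → ‖σ s‖ ^ 2 < ε ^ 2 → deriv (‖σ ·‖ ^ 2) s ≤ 0 := by
    intro s hs hcs hsε
    rw [sq_lt_sq₀ hc₀ (norm_nonneg _)] at hcs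
    rw [sq_lt_sq₀ (norm_nonneg _) hε.le] at hsε
    have hρs : ρ * ε ≤ (1 + μ + ρ) * ‖σ s‖ :=
      (div_le_iff₀' (by linarith)).1 ((le_max_right _ _).trans hcs.le)
    have := hdesc s hs ((le_max_left _ _).trans hcs.le) hsε
    have := barrier_term_add_le_zero (norm_nonneg _) hsε hρs
    rw [(hV s).deriv]
    linarith
  have hsq := lt_of_deriv_nonpos_on_band (fun s => (hV s).differentiableAt)
    (pow_lt_pow_left₀ hcε hc₀ two_ne_zero)
    (pow_le_pow_left₀ (norm_nonneg _) (hinit.trans (le_max_left _ _)) 2) hdecr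
  exact fun t ht => (sq_lt_sq₀ (norm_nonneg _) hε.le).1 (hsq t ht)

/-- Lemma 1 (barrier-function-based adaptive gain): if, whenever `ε/2 ≤ ‖σ(t)‖ < ε`,
the descent inequality `⟨σ, σ′⟩ ≤ −(1+μ)‖σ‖²/(ε − ‖σ‖) + ρ‖σ‖` holds, then once the
trajectory satisfies `‖σ(τ)‖ ≤ ε/2` it remains in `{‖σ‖ < ε}` for all `t ≥ τ`. -/
theorem stmt17 {E : Type*} [NormedAddCommGroup E] [InnerProductSpace ℝ E]
    (τ ε μ ρ : ℝ) (hτ : 0 ≤ τ) (hε : 0 < ε) (hμ : μ > -1) (hρ : 0 ≤ ρ)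
    (σ : ℝ → E) (hσ : Differentiable ℝ σ)
    (hdesc : ∀ t ≥ τ, ε / 2 ≤ ‖σ t‖ → ‖σ t‖ < ε →
      ⟪σ t, deriv σ t⟫ ≤ -(1 + μ) * ‖σ t‖ ^ 2 / (ε - ‖σ t‖) + ρ * ‖σ t‖)
    (hinit : ‖σ τ‖ ≤ ε / 2) :
    ∀ t ≥ τ, ‖σ t‖ < ε :=
  stmt17_general τ ε μ ρ hε hμ hρ σ hσ hdesc hinit
end
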